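/- Let p ≥ 3, s ∈ {1,...,p}, and n₁,...,n_s, m₁,...,m_s positive integers with Σnᵢ + Σmⱼ = p and k = Σnᵢ ≤ p-1 (so Σmⱼ ≥ 1). Then for all N×N Hermitian matrices Y, H: |tr(Y^{n₁}H^{m₁}···Y^{n_s}H^{m_s})| ≤ (tr|Y|^{p+1})^{k/(p+1)} · (tr H²)^{(p-k)/2}. -/

import Mathlib

/-!
Write `‖·‖₂` for the Frobenius norm. Then `|tr (X Z)| ≤ ‖X‖₂ ‖Z‖₂` (Cauchy–Schwarz),
`‖X Z‖₂ ≤ ‖X‖₂ ‖Z‖₂` and `‖X Z‖₂ ≤ ‖X‖_op ‖Z‖₂`. Put `a = (tr |Y|^{p+1})^{1/(p+1)}`, which bounds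
every `|λᵢ(Y)|` and hence `‖Y‖_op`, and `b = (tr H²)^{1/2} = ‖H‖₂`. If `H` occurs at least twice,
the word is a product of at least two blocks `Y^i H^j` with `j ≥ 1`, each of Frobenius norm at most
`a^i b^j`. Otherwise the word is `Y^{p-1} H`, and `‖Y^{p-1}‖₂² = ∑ |λᵢ(Y)|^{2(p-1)} ≤ a^{2(p-1)}`
because `2(p-1) ≥ p+1`.
-/

open scoped Matrix.Norms.Frobenius
open WithLp

theorem List.prod_ofFn_pow_mul_pow_of_sum_eq_one {M : Type*} [Monoid M] {s : ℕ} (x y : M)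
    (k l : Fin s → ℕ) (hl : ∀ i, 1 ≤ l i) (h1 : ∑ i, l i = 1) :
    (List.ofFn fun i => x ^ k i * y ^ l i).prod = x ^ (∑ i, k i) * y := by
  obtain rfl : s = 1 := by
    have hs : s ≤ ∑ i, l i := by
      simpa using Finset.card_nsmul_le_sum Finset.univ l 1 fun i _ => hl i
    rcases s with _ | s
    · simp at h1
    · omega
  simp_all

section PowerSums

variable {ι : Type*} [Fintype ι] {f : ι → ℝ} {c : ℝ} {q : ℕ}

theorem abs_le_of_sum_abs_pow_le (hc : 0 ≤ c) (hq : q ≠ 0) (h : ∑ i, |f i| ^ q ≤ c ^ q)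
    (i : ι) : |f i| ≤ c :=
  (pow_le_pow_iff_left₀ (abs_nonneg _) hc hq).1 <|
    (Finset.single_le_sum (fun j _ => by positivity) (Finset.mem_univ i)).trans h

theorem sum_abs_pow_le_of_sum_abs_pow_le (hc : 0 ≤ c) (hq : q ≠ 0)
    (h : ∑ i, |f i| ^ q ≤ c ^ q) {r : ℕ} (hqr : q ≤ r) : ∑ i, |f i| ^ r ≤ c ^ r := by
  calc ∑ i, |f i| ^ r = ∑ i, |f i| ^ (r - q) * |f i| ^ q := by
        simp_rw [← pow_add, Nat.sub_add_cancel hqr]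
    _ ≤ ∑ i, c ^ (r - q) * |f i| ^ q := by
        gcongr with i
        exact abs_le_of_sum_abs_pow_le hc hq h i
    _ ≤ c ^ (r - q) * c ^ q := by
        rw [← Finset.mul_sum]
        gcongr
    _ = c ^ r := by rw [← pow_add, Nat.sub_add_cancel hqr]

end PowerSums

namespace Matrix

variable {𝕜 m n : Type*} [RCLike 𝕜] [Fintype m] [Fintype n]

theorem frobenius_norm_sq_eq_sum_rows {α : Type*} [SeminormedAddCommGroup α]
    (A : Matrix m n α) :
    ‖A‖ ^ 2 = ∑ i, ‖toLp 2 (A i)‖ ^ 2 :=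
  PiLp.norm_sq_eq_of_L2 _ (toLp 2 fun i => toLp 2 (A i))

theorem norm_trace_mul_le (A : Matrix n m 𝕜) (B : Matrix m n 𝕜) :
    ‖(A * B).trace‖ ≤ ‖A‖ * ‖B‖ := by
  have h : (A * B).trace = inner 𝕜 (toLp 2 fun i => toLp 2 fun j => star (A i j))
      (toLp 2 fun i => toLp 2 fun j => B j i) := by
    simp [trace, mul_apply, PiLp.inner_apply, mul_comm]
  rw [h, ← frobenius_norm_transpose B, ← frobenius_norm_map_eq A star norm_star]
  exact norm_inner_le_norm _ _

variable [DecidableEq n]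

theorem frobenius_norm_mul_le_norm_toEuclideanCLM_mul (A : Matrix n n 𝕜) (B : Matrix n m 𝕜) :
    ‖A * B‖ ≤ ‖toEuclideanCLM (n := n) (𝕜 := 𝕜) A‖ * ‖B‖ := by
  rw [← frobenius_norm_transpose (A * B), ← frobenius_norm_transpose B,
    ← sq_le_sq₀ (norm_nonneg _) (by positivity), mul_pow, frobenius_norm_sq_eq_sum_rows,
    frobenius_norm_sq_eq_sum_rows, Finset.mul_sum]
  gcongr with j
  have hcol : toLp 2 ((A * B)ᵀ j) = toEuclideanCLM (n := n) (𝕜 := 𝕜) A (toLp 2 (Bᵀ j)) := by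
    ext i
    simp [mul_apply, mulVec, dotProduct]
  rw [hcol, ← mul_pow]
  gcongr
  exact (toEuclideanCLM (n := n) (𝕜 := 𝕜) A).le_opNorm _

theorem norm_toEuclideanCLM_le_one_of_mem_unitaryGroup {U : Matrix n n 𝕜}
    (hU : U ∈ unitaryGroup n 𝕜) : ‖toEuclideanCLM (n := n) (𝕜 := 𝕜) U‖ ≤ 1 := by
  have hU' : toEuclideanCLM (n := n) (𝕜 := 𝕜) U ∈ unitary _ := Unitary.map_mem _ hU
  simpa using (CStarRing.norm_mem_unitary_mul 1 hU').trans_le ContinuousLinearMap.norm_id_le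

theorem frobenius_norm_unitary_mul {U : Matrix n n 𝕜} (hU : U ∈ unitaryGroup n 𝕜)
    (M : Matrix n m 𝕜) : ‖U * M‖ = ‖M‖ := by
  refine le_antisymm ?_ ?_
  · calc ‖U * M‖ ≤ ‖toEuclideanCLM (n := n) (𝕜 := 𝕜) U‖ * ‖M‖ :=
          frobenius_norm_mul_le_norm_toEuclideanCLM_mul U M
      _ ≤ ‖M‖ := mul_le_of_le_one_left (norm_nonneg _)
            (norm_toEuclideanCLM_le_one_of_mem_unitaryGroup hU)
  · calc ‖M‖ = ‖star U * (U * M)‖ := by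
          rw [← Matrix.mul_assoc, Unitary.star_mul_self_of_mem hU, Matrix.one_mul]
      _ ≤ ‖toEuclideanCLM (n := n) (𝕜 := 𝕜) (star U)‖ * ‖U * M‖ :=
          frobenius_norm_mul_le_norm_toEuclideanCLM_mul _ _
      _ ≤ ‖U * M‖ := mul_le_of_le_one_left (norm_nonneg _)
            (norm_toEuclideanCLM_le_one_of_mem_unitaryGroup (Unitary.star_mem hU))

theorem frobenius_norm_mul_unitary {U : Matrix n n 𝕜} (hU : U ∈ unitaryGroup n 𝕜)
    (M : Matrix m n 𝕜) : ‖M * U‖ = ‖M‖ := by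
  rw [← frobenius_norm_conjTranspose, conjTranspose_mul, ← star_eq_conjTranspose,
    frobenius_norm_unitary_mul (Unitary.star_mem hU), frobenius_norm_conjTranspose]

namespace IsHermitian

variable {A : Matrix n n 𝕜}

theorem frobenius_norm_pow_sq (hA : A.IsHermitian) (k : ℕ) :
    ‖A ^ k‖ ^ 2 = ∑ i, hA.eigenvalues i ^ (2 * k) := by
  conv_lhs => rw [hA.spectral_theorem]
  rw [← map_pow, Unitary.conjStarAlgAut_apply, diagonal_pow,
    frobenius_norm_mul_unitary (Unitary.star_mem (SetLike.coe_mem _)),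
    frobenius_norm_unitary_mul (SetLike.coe_mem _), frobenius_norm_diagonal,
    EuclideanSpace.norm_sq_eq]
  simp only [Pi.pow_apply, Function.comp_apply, norm_pow, RCLike.norm_ofReal, ← pow_mul,
    mul_comm k 2, (even_two_mul k).pow_abs]

theorem norm_toEuclideanCLM (hA : A.IsHermitian) :
    ‖toEuclideanCLM (n := n) (𝕜 := 𝕜) A‖ = ‖hA.eigenvalues‖ := by
  conv_lhs => rw [hA.spectral_theorem]
  have hU : toEuclideanCLM (n := n) (𝕜 := 𝕜) hA.eigenvectorUnitary ∈ unitary _ :=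
    Unitary.map_mem _ (SetLike.coe_mem _)
  rw [Unitary.conjStarAlgAut_apply, map_mul, map_mul, map_star,
    CStarRing.norm_mul_mem_unitary _ (Unitary.star_mem hU), CStarRing.norm_mem_unitary_mul _ hU]
  refine (l2_opNorm_diagonal (RCLike.ofReal ∘ hA.eigenvalues)).trans ?_
  simp [Pi.norm_def]

theorem norm_toEuclideanCLM_le (hA : A.IsHermitian) {c : ℝ} {q : ℕ} (hc : 0 ≤ c) (hq : q ≠ 0)
    (h : ∑ i, |hA.eigenvalues i| ^ q ≤ c ^ q) : ‖toEuclideanCLM (n := n) (𝕜 := 𝕜) A‖ ≤ c := by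
  rw [hA.norm_toEuclideanCLM]
  exact (pi_norm_le_iff_of_nonneg hc).2 fun i => abs_le_of_sum_abs_pow_le hc hq h i

theorem frobenius_norm_pow_le (hA : A.IsHermitian) {c : ℝ} {q j : ℕ} (hc : 0 ≤ c) (hq : q ≠ 0)
    (h : ∑ i, |hA.eigenvalues i| ^ q ≤ c ^ q) (hqj : q ≤ 2 * j) : ‖A ^ j‖ ≤ c ^ j := by
  refine (pow_le_pow_iff_left₀ (norm_nonneg _) (by positivity) two_ne_zero).1 ?_
  rw [hA.frobenius_norm_pow_sq, ← pow_mul, mul_comm j 2]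
  calc ∑ i, hA.eigenvalues i ^ (2 * j) = ∑ i, |hA.eigenvalues i| ^ (2 * j) :=
        Finset.sum_congr rfl fun i _ => ((even_two_mul j).pow_abs _).symm
    _ ≤ c ^ (2 * j) := sum_abs_pow_le_of_sum_abs_pow_le hc hq h hqj

end IsHermitian

theorem norm_trace_prod_le_prod_norm {L : List (Matrix n n 𝕜)} (hL : 2 ≤ L.length) :
    ‖L.prod.trace‖ ≤ (L.map (‖·‖)).prod := by
  obtain _ | ⟨A, _ | ⟨B, L⟩⟩ := L
  · simp at hL
  · simp at hL
  rw [List.prod_cons, List.map_cons, List.prod_cons]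
  exact (norm_trace_mul_le _ _).trans <|
    mul_le_mul_of_nonneg_left (List.norm_prod_le' (List.cons_ne_nil _ _)) (norm_nonneg _)

theorem frobenius_norm_pow_mul_pow_le (A B : Matrix n n 𝕜) (i : ℕ) {j : ℕ} (hj : 1 ≤ j) :
    ‖A ^ i * B ^ j‖ ≤ ‖toEuclideanCLM (n := n) (𝕜 := 𝕜) A‖ ^ i * ‖B‖ ^ j := by
  have hA : ‖toEuclideanCLM (n := n) (𝕜 := 𝕜) (A ^ i)‖ ≤
      ‖toEuclideanCLM (n := n) (𝕜 := 𝕜) A‖ ^ i := by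
    rcases i.eq_zero_or_pos with rfl | hi
    · rw [pow_zero, pow_zero, map_one]
      exact ContinuousLinearMap.norm_id_le
    · rw [map_pow]
      exact norm_pow_le' _ hi
  calc ‖A ^ i * B ^ j‖ ≤ ‖toEuclideanCLM (n := n) (𝕜 := 𝕜) (A ^ i)‖ * ‖B ^ j‖ :=
        frobenius_norm_mul_le_norm_toEuclideanCLM_mul _ _
    _ ≤ ‖toEuclideanCLM (n := n) (𝕜 := 𝕜) A‖ ^ i * ‖B‖ ^ j := by
        gcongr
        exact norm_pow_le' _ hj

theorem norm_trace_prod_ofFn_pow_mul_pow_le {s : ℕ} (A B : Matrix n n 𝕜) (k l : Fin s → ℕ)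
    (hl : ∀ i, 1 ≤ l i) (hl2 : 2 ≤ ∑ i, l i) :
    ‖(List.ofFn fun i => A ^ k i * B ^ l i).prod.trace‖ ≤
      ‖toEuclideanCLM (n := n) (𝕜 := 𝕜) A‖ ^ (∑ i, k i) * ‖B‖ ^ (∑ i, l i) := by
  match s, k, l, hl, hl2 with
  | 0, _, _, _, hl2 => simp at hl2
  | 1, k, l, _, hl2 =>
    simp only [Fin.sum_univ_one] at hl2 ⊢
    have hB : B ^ l 0 = B ^ (l 0 - 1) * B := by rw [← pow_succ, Nat.sub_add_cancel (by omega)]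
    rw [List.ofFn_succ, List.ofFn_zero, List.prod_singleton, hB, ← Matrix.mul_assoc]
    calc _ ≤ ‖A ^ k 0 * B ^ (l 0 - 1)‖ * ‖B‖ := norm_trace_mul_le _ _
      _ ≤ ‖toEuclideanCLM (n := n) (𝕜 := 𝕜) A‖ ^ k 0 * ‖B‖ ^ (l 0 - 1) * ‖B‖ := by
          gcongr
          exact frobenius_norm_pow_mul_pow_le _ _ _ (by omega)
      _ = _ := by rw [mul_assoc, ← pow_succ, Nat.sub_add_cancel (by omega)]
  | t + 2, k, l, hl, _ =>
    refine (norm_trace_prod_le_prod_norm (by simp)).trans ?_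
    rw [List.map_ofFn, List.prod_ofFn, ← Finset.prod_pow_eq_pow_sum,
      ← Finset.prod_pow_eq_pow_sum, ← Finset.prod_mul_distrib]
    exact Finset.prod_le_prod (fun i _ => norm_nonneg _)
      fun i _ => frobenius_norm_pow_mul_pow_le _ _ _ (hl i)

end Matrix

theorem trace_word_holder_bound_general
    {N p s : ℕ} (hp : 3 ≤ p)
    (n m : Fin s → ℕ) (hm : ∀ i, 1 ≤ m i)
    (hsum : (∑ i, n i) + (∑ i, m i) = p)
    (hk : (∑ i, n i) ≤ p - 1)
    (Y H : Matrix (Fin N) (Fin N) ℂ)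
    (hY : Y.IsHermitian) (hH : H.IsHermitian) :
    ‖((List.ofFn fun i : Fin s => Y ^ n i * H ^ m i).prod).trace‖ ≤
      (∑ i, |hY.eigenvalues i| ^ (p + 1)) ^ ((∑ i, n i : ℝ) / (p + 1)) *
      (∑ i, (hH.eigenvalues i) ^ 2) ^ (((p : ℝ) - (∑ i, n i)) / 2) := by
  set A := ∑ i, |hY.eigenvalues i| ^ (p + 1)
  set B := ∑ i, hH.eigenvalues i ^ 2
  have hA0 : 0 ≤ A := by positivity
  have hB0 : 0 ≤ B := by positivity
  set a := A ^ ((p + 1 : ℕ) : ℝ)⁻¹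
  have ha : A ≤ a ^ (p + 1) := (Real.rpow_inv_natCast_pow hA0 (by omega)).ge
  have hH2 : ‖H‖ = √B := by
    rw [← Real.sqrt_sq (norm_nonneg H), ← pow_one H, hH.frobenius_norm_pow_sq]
  have key : ‖((List.ofFn fun i : Fin s => Y ^ n i * H ^ m i).prod).trace‖ ≤
      a ^ (∑ i, n i) * √B ^ (p - ∑ i, n i) := by
    obtain h2 | h1 : 2 ≤ ∑ i, m i ∨ ∑ i, m i = 1 := by omega
    · refine (Matrix.norm_trace_prod_ofFn_pow_mul_pow_le Y H n m hm h2).trans ?_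
      rw [← hH2, show p - ∑ i, n i = ∑ i, m i by omega]
      gcongr
      exact hY.norm_toEuclideanCLM_le (by positivity) (by omega) ha
    · rw [List.prod_ofFn_pow_mul_pow_of_sum_eq_one Y H n m hm h1]
      refine (Matrix.norm_trace_mul_le _ _).trans ?_
      rw [hH2, show p - ∑ i, n i = 1 by omega, pow_one]
      gcongr
      exact hY.frobenius_norm_pow_le (by positivity) (by omega) ha (by omega)
  refine key.trans_eq ?_
  rw [← Real.rpow_natCast, ← Real.rpow_natCast, ← Real.rpow_mul hA0, Real.sqrt_eq_rpow,
    ← Real.rpow_mul hB0, Nat.cast_sub (by omega)]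
  push_cast
  ring_nf

/-- Hölder-type bound on the trace of an alternating word
`Y^{n₁} H^{m₁} ⋯ Y^{n_s} H^{m_s}` in two Hermitian matrices, in terms of the
eigenvalues (`tr |Y|^{p+1} = ∑ i |λ_i(Y)|^{p+1}` and `tr H² = ∑ i λ_i(H)²`). -/
theorem trace_word_holder_bound
    {N p s : ℕ} (hp : 3 ≤ p) (hs1 : 1 ≤ s) (hsp : s ≤ p)
    (n m : Fin s → ℕ) (hn : ∀ i, 1 ≤ n i) (hm : ∀ i, 1 ≤ m i)
    (hsum : (∑ i, n i) + (∑ i, m i) = p)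
    (hk : (∑ i, n i) ≤ p - 1)
    (Y H : Matrix (Fin N) (Fin N) ℂ)
    (hY : Y.IsHermitian) (hH : H.IsHermitian) :
    ‖((List.ofFn fun i : Fin s => Y ^ n i * H ^ m i).prod).trace‖ ≤
      (∑ i, |hY.eigenvalues i| ^ (p + 1)) ^ ((∑ i, n i : ℝ) / (p + 1)) *
      (∑ i, (hH.eigenvalues i) ^ 2) ^ (((p : ℝ) - (∑ i, n i)) / 2) :=
  trace_word_holder_bound_general hp n m hm hsum hk Y H hY hH
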